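/- Let (Σ,μ) be a σ-finite measure space, 1 ≤ p < ∞, Y a Banach space, and let Ω : L_p(μ) → Y be a quasi-linear map which is not locally trivial. Then there exists a sequence (u_n) of norm-one, pairwise disjointly supported functions in L_p(μ) such that the restriction of Ω to the closed linear span of {u_n : n ∈ ℕ} (a subspace isometric to ℓ_p, since normalized disjointly supported sequences in L_p span isometric copies of ℓ_p) is not locally trivial. -/

import Mathlib

open MeasureTheory
open scoped ENNReal

noncomputable section

section Defs

variable {X Y : Type*} [NormedAddCommGroup X] [NormedSpace ℝ X]
  [NormedAddCommGroup Y] [NormedSpace ℝ Y]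

/-- `Ω` is quasi-linear: homogeneous and quasi-additive. -/
def IsQuasiLinear (Ω : X → Y) : Prop :=
  (∀ (c : ℝ) (x : X), Ω (c • x) = c • Ω x) ∧
    ∃ Q : ℝ, 0 ≤ Q ∧ ∀ x y : X, ‖Ω (x + y) - Ω x - Ω y‖ ≤ Q * (‖x‖ + ‖y‖)

/-- `Ω` is `C`-trivial on the subspace `E`. -/
def TrivialOnWith (Ω : X → Y) (E : Submodule ℝ X) (C : ℝ) : Prop :=
  ∃ L : E →ₗ[ℝ] Y, ∀ x : E, ‖Ω x - L x‖ ≤ C * ‖(x : X)‖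

/-- `Ω` is locally trivial: a uniform constant works for all finite-dimensional subspaces. -/
def LocallyTrivial (Ω : X → Y) : Prop :=
  ∃ C : ℝ, 0 < C ∧ ∀ F : Submodule ℝ X, FiniteDimensional ℝ F → TrivialOnWith Ω F C

/-- `Ω` is locally trivial on the subspace `H`. -/
def LocallyTrivialOn (Ω : X → Y) (H : Submodule ℝ X) : Prop :=
  ∃ C : ℝ, 0 < C ∧ ∀ F : Submodule ℝ X, F ≤ H → FiniteDimensional ℝ F → TrivialOnWith Ω F C

end Defs

/-- Two elements of `L_p(μ)` are disjointly supported (up to null sets). -/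
def DisjSupp {α : Type*} [MeasurableSpace α] {μ : Measure α} {q : ℝ≥0∞}
    (f g : Lp ℝ q μ) : Prop := ∀ᵐ a ∂μ, f a = 0 ∨ g a = 0

/-!
Call a measurable set `T` unbounded for `Ω` if, for every `c`, some finite family of disjointly
supported functions vanishing off `T` spans a subspace on which `Ω` is not `c`-trivial. Splitting
such a family along a measurable set `A` costs only `2Q` in the triviality constant, so unboundedness
of `T` passes to `T ∩ A` or to `T \ A`. Since a single function spans a line, on which `Ω` is
linear, an unbounded `D` contains an unbounded `P` such that `D \ P` carries an arbitrarily bad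
family; taking `D` nearly minimal for a finite measure `ν` makes `ν (D \ P)` small, and gluing
countably many such pieces shows that there are unbounded sets of arbitrarily small `ν`-measure.
With `ν` the `p`-th power density of finitely many functions, cutting such a set away perturbs a
bad finite-dimensional subspace only slightly, hence keeps it bad. The whole space is unbounded
because finite-dimensional subspaces are close to spans of disjoint indicator functions; peeling
off bad blocks from a decreasing sequence of unbounded sets and normalizing their members gives
the sequence.
-/

theorem Module.Basis.exists_pos_forall_norm_le {ι E F : Type*} [Finite ι] [NormedAddCommGroup E]
    [NormedSpace ℝ E] [FiniteDimensional ℝ E] [NormedAddCommGroup F] [NormedSpace ℝ F]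
    (b : Module.Basis ι ℝ E) {ε : ℝ} (hε : 0 < ε) :
    ∃ δ > 0, ∀ u : E →ₗ[ℝ] F, (∀ i, ‖u (b i)‖ ≤ δ) → ∀ x, ‖u x‖ ≤ ε * ‖x‖ := by
  obtain ⟨K, hK, hb⟩ := b.exists_opNorm_le (F := F)
  refine ⟨ε / K, by positivity, fun u hu x => ?_⟩
  calc ‖u x‖ = ‖LinearMap.toContinuousLinearMap u x‖ := rfl
    _ ≤ ‖LinearMap.toContinuousLinearMap u‖ * ‖x‖ := ContinuousLinearMap.le_opNorm _ _
    _ ≤ K * (ε / K) * ‖x‖ := by gcongr; exact hb (by positivity) hu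
    _ = ε * ‖x‖ := by field_simp

section QuasiLinear

variable {X Y : Type*} [NormedAddCommGroup X] [NormedAddCommGroup Y] {Ω : X → Y}

theorem map_zero_of_quasiAdditive {r : ℝ}
    (hq : ∀ x y : X, ‖Ω (x + y) - Ω x - Ω y‖ ≤ r * (‖x‖ + ‖y‖)) : Ω 0 = 0 := by
  simpa using hq 0 0

theorem norm_map_sum_sub_sum_le {r : ℝ} (hr : 0 ≤ r)
    (hq : ∀ x y : X, ‖Ω (x + y) - Ω x - Ω y‖ ≤ r * (‖x‖ + ‖y‖))
    {ι : Type*} (s : Finset ι) (z : ι → X) :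
    ‖Ω (∑ i ∈ s, z i) - ∑ i ∈ s, Ω (z i)‖ ≤ r * s.card * ∑ i ∈ s, ‖z i‖ := by
  classical
  induction s using Finset.induction_on with
  | empty => simp [map_zero_of_quasiAdditive hq]
  | @insert a s ha ih =>
    have hs : ‖∑ i ∈ s, z i‖ ≤ ∑ i ∈ s, ‖z i‖ := norm_sum_le _ _
    have hsum : 0 ≤ ∑ i ∈ s, ‖z i‖ := Finset.sum_nonneg fun i _ => norm_nonneg _
    rw [Finset.sum_insert ha, Finset.sum_insert ha, Finset.sum_insert ha,
      Finset.card_insert_of_notMem ha, Nat.cast_succ]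
    calc ‖Ω (z a + ∑ i ∈ s, z i) - (Ω (z a) + ∑ i ∈ s, Ω (z i))‖
        = ‖(Ω (z a + ∑ i ∈ s, z i) - Ω (z a) - Ω (∑ i ∈ s, z i))
          + (Ω (∑ i ∈ s, z i) - ∑ i ∈ s, Ω (z i))‖ := by congr 1; abel
      _ ≤ ‖Ω (z a + ∑ i ∈ s, z i) - Ω (z a) - Ω (∑ i ∈ s, z i)‖
          + ‖Ω (∑ i ∈ s, z i) - ∑ i ∈ s, Ω (z i)‖ := norm_add_le _ _
      _ ≤ r * (‖z a‖ + ∑ i ∈ s, ‖z i‖) + r * s.card * ∑ i ∈ s, ‖z i‖ := by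
          gcongr
          exact (hq _ _).trans (by gcongr)
      _ ≤ r * (s.card + 1) * (‖z a‖ + ∑ i ∈ s, ‖z i‖) := by
          have := norm_nonneg (z a)
          have : (0 : ℝ) ≤ s.card := s.card.cast_nonneg
          nlinarith [mul_nonneg hr this, mul_nonneg (mul_nonneg hr this) (norm_nonneg (z a))]

variable [NormedSpace ℝ X] [NormedSpace ℝ Y]

theorem TrivialOnWith.mono_const {E : Submodule ℝ X} {C C' : ℝ} (h : TrivialOnWith Ω E C)
    (hC : C ≤ C') : TrivialOnWith Ω E C' :=
  let ⟨L, hL⟩ := h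
  ⟨L, fun x => (hL x).trans (mul_le_mul_of_nonneg_right hC (norm_nonneg _))⟩

theorem TrivialOnWith.mono {E E' : Submodule ℝ X} {C : ℝ} (h : TrivialOnWith Ω E' C)
    (hE : E ≤ E') : TrivialOnWith Ω E C :=
  let ⟨L, hL⟩ := h
  ⟨L.comp (Submodule.inclusion hE), fun x => hL (Submodule.inclusion hE x)⟩

theorem trivialOnWith_zero_of_le_span_singleton (hhom : ∀ (c : ℝ) (x : X), Ω (c • x) = c • Ω x)
    {E : Submodule ℝ X} {w : X} (hE : E ≤ Submodule.span ℝ {w}) : TrivialOnWith Ω E 0 := by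
  let L : Submodule.span ℝ {w} →ₗ[ℝ] Y :=
    { toFun := fun x => Ω x
      map_add' := by
        rintro ⟨_, hx⟩ ⟨_, hy⟩
        obtain ⟨a, rfl⟩ := Submodule.mem_span_singleton.mp hx
        obtain ⟨b, rfl⟩ := Submodule.mem_span_singleton.mp hy
        simp only [Submodule.coe_add, ← add_smul, hhom]
      map_smul' := fun c x => hhom c x }
  exact TrivialOnWith.mono ⟨L, fun x => by simp [L]⟩ hE

theorem exists_ne_zero_of_not_trivialOnWith_span (hhom : ∀ (c : ℝ) (x : X), Ω (c • x) = c • Ω x)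
    {s : Set X} {c : ℝ} (hc : 0 ≤ c) (h : ¬ TrivialOnWith Ω (Submodule.span ℝ s) c) :
    ∃ x ∈ s, x ≠ 0 := by
  by_contra! hs
  refine h ((trivialOnWith_zero_of_le_span_singleton hhom (w := 0) ?_).mono_const hc)
  exact Submodule.span_mono fun x hx => hs x hx

theorem exists_linearMap_near_of_quasiAdditive (F : Type*) [NormedAddCommGroup F] [NormedSpace ℝ F]
    [FiniteDimensional ℝ F] :
    ∃ M : ℝ, 0 ≤ M ∧ ∀ (ψ : F → Y) {r : ℝ}, 0 ≤ r → (∀ (c : ℝ) (x : F), ψ (c • x) = c • ψ x) →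
      (∀ x y : F, ‖ψ (x + y) - ψ x - ψ y‖ ≤ r * (‖x‖ + ‖y‖)) →
      ∃ L : F →ₗ[ℝ] Y, ∀ x, ‖ψ x - L x‖ ≤ r * M * ‖x‖ := by
  let b := Module.finBasis ℝ F
  let e : F →L[ℝ] Fin (Module.finrank ℝ F) → ℝ := b.equivFunL
  set K := ‖e‖
  refine ⟨Module.finrank ℝ F * (K * ∑ i, ‖b i‖), by positivity,
    fun ψ r hr hhom hq => ⟨b.constr ℝ fun i => ψ (b i), fun x => ?_⟩⟩
  have hcoef : ∀ i, ‖b.equivFun x i‖ ≤ K * ‖x‖ := fun i =>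
    (norm_le_pi_norm (e x) i).trans (e.le_opNorm x)
  calc ‖ψ x - b.constr ℝ (fun i => ψ (b i)) x‖
      = ‖ψ (∑ i, b.equivFun x i • b i) - ∑ i, ψ (b.equivFun x i • b i)‖ := by
        rw [b.sum_equivFun, Module.Basis.constr_apply_fintype]
        simp only [hhom]
    _ ≤ r * Module.finrank ℝ F * ∑ i, ‖b.equivFun x i • b i‖ := by
        simpa using norm_map_sum_sub_sum_le hr hq Finset.univ fun i => b.equivFun x i • b i
    _ ≤ r * Module.finrank ℝ F * ∑ i, K * ‖x‖ * ‖b i‖ := by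
        gcongr with i
        rw [norm_smul]
        gcongr
        exact hcoef i
    _ = r * (Module.finrank ℝ F * (K * ∑ i, ‖b i‖)) * ‖x‖ := by
        rw [← Finset.mul_sum]
        ring

theorem exists_linearMap_near_comp (hhom : ∀ (c : ℝ) (x : X), Ω (c • x) = c • Ω x)
    {Q : ℝ} (hQ0 : 0 ≤ Q) (hQ : ∀ x y : X, ‖Ω (x + y) - Ω x - Ω y‖ ≤ Q * (‖x‖ + ‖y‖))
    (F : Type*) [NormedAddCommGroup F] [NormedSpace ℝ F] [FiniteDimensional ℝ F] :
    ∃ M : ℝ, 0 ≤ M ∧ ∀ (S : F →ₗ[ℝ] X) {ε : ℝ}, 0 ≤ ε → (∀ x, ‖S x‖ ≤ ε * ‖x‖) →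
      ∃ L : F →ₗ[ℝ] Y, ∀ x, ‖Ω (S x) - L x‖ ≤ Q * ε * M * ‖x‖ := by
  obtain ⟨M, hM0, hM⟩ := exists_linearMap_near_of_quasiAdditive (Y := Y) F
  refine ⟨M, hM0, fun S ε hε hS => hM (fun x => Ω (S x)) (mul_nonneg hQ0 hε)
    (fun c x => by simp only [map_smul, hhom]) fun x y => ?_⟩
  calc ‖Ω (S (x + y)) - Ω (S x) - Ω (S y)‖ ≤ Q * (‖S x‖ + ‖S y‖) := by rw [map_add]; exact hQ _ _
    _ ≤ Q * (ε * ‖x‖ + ε * ‖y‖) := by gcongr <;> exact hS _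
    _ = Q * ε * (‖x‖ + ‖y‖) := by ring

theorem exists_pos_trivialOnWith_of_approx (hhom : ∀ (c : ℝ) (x : X), Ω (c • x) = c • Ω x)
    {Q : ℝ} (hQ0 : 0 ≤ Q) (hQ : ∀ x y : X, ‖Ω (x + y) - Ω x - Ω y‖ ≤ Q * (‖x‖ + ‖y‖))
    (F : Submodule ℝ X) [FiniteDimensional ℝ F] {C : ℝ} (hC : 0 ≤ C) :
    ∃ ε > 0, ∀ (E : Submodule ℝ X) (T : F →ₗ[ℝ] E), (∀ x, ‖(T x : X) - x‖ ≤ ε * ‖x‖) →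
      TrivialOnWith Ω E C → TrivialOnWith Ω F (C + 3 * Q + 2) := by
  obtain ⟨M, hM0, hM⟩ := exists_linearMap_near_comp hhom hQ0 hQ F
  set ε := (Q * M + C + 1)⁻¹ with hε
  have hεpos : 0 < ε := by positivity
  have hεQM : Q * ε * M ≤ 1 := by
    rw [hε, mul_right_comm, ← div_eq_mul_inv, div_le_one (by positivity)]
    linarith
  have hεC : C * ε ≤ 1 := by
    rw [hε, ← div_eq_mul_inv, div_le_one (by positivity)]
    nlinarith [mul_nonneg hQ0 hM0]
  have hε1 : ε ≤ 1 := inv_le_one_of_one_le₀ (by nlinarith [mul_nonneg hQ0 hM0])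
  refine ⟨ε, hεpos, fun E T hT ⟨L, hL⟩ => ?_⟩
  let S : F →ₗ[ℝ] X := F.subtype - E.subtype ∘ₗ T
  have hS : ∀ x, ‖S x‖ ≤ ε * ‖x‖ := fun x => by simpa [S, norm_sub_rev] using hT x
  obtain ⟨L₁, hL₁⟩ := hM S hεpos.le hS
  refine ⟨L ∘ₗ T + L₁, fun x => ?_⟩
  have hx : (x : X) = T x + S x := by simp [S]
  have hTx : ‖(T x : X)‖ ≤ (1 + ε) * ‖x‖ := by
    calc ‖(T x : X)‖ = ‖((T x : X) - x) + x‖ := by rw [sub_add_cancel]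
      _ ≤ ε * ‖x‖ + ‖x‖ := (norm_add_le _ _).trans (add_le_add (hT x) le_rfl)
      _ = (1 + ε) * ‖x‖ := by ring
  calc ‖Ω x - (L ∘ₗ T + L₁) x‖
      = ‖(Ω (T x + S x) - Ω (T x) - Ω (S x)) + (Ω (T x) - L (T x)) + (Ω (S x) - L₁ x)‖ := by
        rw [← hx, LinearMap.add_apply, LinearMap.comp_apply]
        congr 1
        abel
    _ ≤ Q * (‖(T x : X)‖ + ‖S x‖) + C * ‖(T x : X)‖ + Q * ε * M * ‖x‖ :=
        norm_add₃_le.trans (add_le_add_three (hQ _ _) (hL _) (hL₁ x))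
    _ ≤ Q * ((1 + ε) * ‖x‖ + ε * ‖x‖) + C * ((1 + ε) * ‖x‖) + 1 * ‖x‖ := by
        gcongr
        exact hS x
    _ ≤ (C + 3 * Q + 2) * ‖x‖ := by
        nlinarith [norm_nonneg x, mul_nonneg hQ0 (sub_nonneg.mpr hε1)]

theorem trivialOnWith_of_decomposition {Q : ℝ} (hQ0 : 0 ≤ Q)
    (hQ : ∀ x y : X, ‖Ω (x + y) - Ω x - Ω y‖ ≤ Q * (‖x‖ + ‖y‖))
    {P₁ P₂ : X →ₗ[ℝ] X} (hP : ∀ x, P₁ x + P₂ x = x)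
    (hP₁ : ∀ x, ‖P₁ x‖ ≤ ‖x‖) (hP₂ : ∀ x, ‖P₂ x‖ ≤ ‖x‖)
    {E E₁ E₂ : Submodule ℝ X} (hE₁ : E.map P₁ ≤ E₁) (hE₂ : E.map P₂ ≤ E₂)
    {C₁ C₂ : ℝ} (hC₁ : 0 ≤ C₁) (hC₂ : 0 ≤ C₂)
    (h₁ : TrivialOnWith Ω E₁ C₁) (h₂ : TrivialOnWith Ω E₂ C₂) :
    TrivialOnWith Ω E (C₁ + C₂ + 2 * Q) := by
  obtain ⟨L₁, hL₁⟩ := h₁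
  obtain ⟨L₂, hL₂⟩ := h₂
  let R₁ : E →ₗ[ℝ] E₁ := P₁.restrict fun x hx => hE₁ (Submodule.mem_map_of_mem hx)
  let R₂ : E →ₗ[ℝ] E₂ := P₂.restrict fun x hx => hE₂ (Submodule.mem_map_of_mem hx)
  refine ⟨L₁ ∘ₗ R₁ + L₂ ∘ₗ R₂, fun x => ?_⟩
  calc ‖Ω x - (L₁ ∘ₗ R₁ + L₂ ∘ₗ R₂) x‖
      = ‖(Ω (P₁ x + P₂ x) - Ω (P₁ x) - Ω (P₂ x)) + (Ω (P₁ x) - L₁ (R₁ x))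
          + (Ω (P₂ x) - L₂ (R₂ x))‖ := by
        rw [hP, LinearMap.add_apply, LinearMap.comp_apply, LinearMap.comp_apply]
        congr 1
        abel
    _ ≤ Q * (‖P₁ x‖ + ‖P₂ x‖) + C₁ * ‖P₁ x‖ + C₂ * ‖P₂ x‖ :=
        norm_add₃_le.trans (add_le_add_three (hQ _ _) (hL₁ (R₁ x)) (hL₂ (R₂ x)))
    _ ≤ Q * (‖(x : X)‖ + ‖(x : X)‖) + C₁ * ‖(x : X)‖ + C₂ * ‖(x : X)‖ := by
        gcongr <;> first | exact hP₁ _ | exact hP₂ _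
    _ = (C₁ + C₂ + 2 * Q) * ‖(x : X)‖ := by ring

end QuasiLinear

section Lp

variable {α : Type*} [MeasurableSpace α] {μ : Measure α} {q : ℝ≥0∞} {A T T' : Set α}

theorem DisjSupp.smul {f g : Lp ℝ q μ} (h : DisjSupp f g) (a b : ℝ) : DisjSupp (a • f) (b • g) := by
  filter_upwards [h, Lp.coeFn_smul a f, Lp.coeFn_smul b g] with x hx hf hg
  rw [hf, hg, Pi.smul_apply, Pi.smul_apply]
  exact hx.imp (fun h => by rw [h, smul_zero]) fun h => by rw [h, smul_zero]

theorem disjSupp_of_disjoint {f g : Lp ℝ q μ} {A B : Set α} (hf : ∀ᵐ a ∂μ, a ∉ A → f a = 0)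
    (hg : ∀ᵐ a ∂μ, a ∉ B → g a = 0) (hAB : Disjoint A B) : DisjSupp f g := by
  filter_upwards [hf, hg] with a hfa hga
  by_cases haA : a ∈ A
  · exact Or.inr (hga (Set.disjoint_left.mp hAB haA))
  · exact Or.inl (hfa haA)

theorem eq_zero_of_disjSupp_self {f : Lp ℝ q μ} (h : DisjSupp f f) : f = 0 := by
  refine Lp.ext ?_
  filter_upwards [h, Lp.coeFn_zero ℝ q μ] with a ha h0
  rw [h0]
  exact ha.elim id id

def Lp.indicatorₗ {A : Set α} (hA : MeasurableSet A) : Lp ℝ q μ →ₗ[ℝ] Lp ℝ q μ where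
  toFun f := ((Lp.memLp f).indicator hA).toLp (A.indicator f)
  map_add' f g := by
    rw [← MemLp.toLp_add]
    refine MemLp.toLp_congr _ _ ?_
    filter_upwards [Lp.coeFn_add f g] with a ha
    by_cases haA : a ∈ A
    · simpa only [Set.indicator_of_mem haA, Pi.add_apply] using ha
    · simp [haA]
  map_smul' c f := by
    rw [RingHom.id_apply, ← MemLp.toLp_const_smul]
    refine MemLp.toLp_congr _ _ ?_
    filter_upwards [Lp.coeFn_smul c f] with a ha
    by_cases haA : a ∈ A
    · simpa only [Set.indicator_of_mem haA, Pi.smul_apply] using ha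
    · simp [haA]

namespace Lp

theorem indicatorₗ_coeFn (hA : MeasurableSet A) (f : Lp ℝ q μ) :
    ⇑(indicatorₗ hA f) =ᵐ[μ] A.indicator f :=
  MemLp.coeFn_toLp (E := ℝ) ((Lp.memLp f).indicator hA)

theorem norm_indicatorₗ_le (hA : MeasurableSet A) (f : Lp ℝ q μ) : ‖indicatorₗ hA f‖ ≤ ‖f‖ := by
  refine Lp.norm_le_norm_of_ae_le ?_
  filter_upwards [indicatorₗ_coeFn hA f] with a ha
  rw [ha]
  exact norm_indicator_le_norm_self _ _

theorem indicatorₗ_add_indicatorₗ_compl (hA : MeasurableSet A) (f : Lp ℝ q μ) :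
    indicatorₗ hA f + indicatorₗ hA.compl f = f := by
  refine Lp.ext ?_
  filter_upwards [Lp.coeFn_add (indicatorₗ hA f) (indicatorₗ hA.compl f),
    indicatorₗ_coeFn hA f, indicatorₗ_coeFn hA.compl f] with a h h₁ h₂
  rw [h, Pi.add_apply, h₁, h₂, Set.indicator_self_add_compl_apply]

theorem indicatorₗ_eq_zero (hA : MeasurableSet A) {f : Lp ℝ q μ}
    (hf : ∀ᵐ a ∂μ, a ∈ A → f a = 0) : indicatorₗ hA f = 0 := by
  refine Lp.ext ?_
  filter_upwards [indicatorₗ_coeFn hA f, Lp.coeFn_zero ℝ q μ, hf] with a h h₀ hfa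
  rw [h, h₀, Pi.zero_apply, Set.indicator_apply_eq_zero]
  exact hfa
end Lp

theorem DisjSupp.indicatorₗ {f g : Lp ℝ q μ} (h : DisjSupp f g) (hA : MeasurableSet A) :
    DisjSupp (Lp.indicatorₗ hA f) (Lp.indicatorₗ hA g) := by
  filter_upwards [h, Lp.indicatorₗ_coeFn hA f, Lp.indicatorₗ_coeFn hA g] with a ha hf hg
  rw [hf, hg]
  exact ha.imp (fun h => by simp [h]) fun h => by simp [h]

def DisjointFamilyOn (T : Set α) (s : Set (Lp ℝ q μ)) : Prop :=
  s.Finite ∧ s.Pairwise DisjSupp ∧ ∀ f ∈ s, ∀ᵐ a ∂μ, a ∉ T → f a = 0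

theorem DisjointFamilyOn.mono {s : Set (Lp ℝ q μ)} (h : DisjointFamilyOn T s) (hT : T ⊆ T') :
    DisjointFamilyOn T' s :=
  ⟨h.1, h.2.1, fun f hf => (h.2.2 f hf).mono fun _ ha haT => ha fun h => haT (hT h)⟩

theorem DisjointFamilyOn.image_indicatorₗ {s : Set (Lp ℝ q μ)} (h : DisjointFamilyOn T s)
    (hA : MeasurableSet A) : DisjointFamilyOn (T ∩ A) (Lp.indicatorₗ hA '' s) := by
  refine ⟨h.1.image _, ?_, ?_⟩
  · rintro _ ⟨f, hf, rfl⟩ _ ⟨g, hg, rfl⟩ hne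
    exact (h.2.1 hf hg fun hfg => hne (hfg ▸ rfl)).indicatorₗ hA
  · rintro _ ⟨f, hf, rfl⟩
    filter_upwards [h.2.2 f hf, Lp.indicatorₗ_coeFn hA f] with a hfa ha haTA
    rw [ha, Set.indicator_apply_eq_zero]
    exact fun haA => hfa fun haT => haTA ⟨haT, haA⟩

theorem exists_cover_of_pairwise_disjSupp {s : Set (Lp ℝ q μ)} (hs : s.Finite)
    (hdisj : s.Pairwise DisjSupp) :
    ∃ 𝒜 : Set (Set α), 𝒜.Finite ∧ (∀ A ∈ 𝒜, MeasurableSet A) ∧ ⋃₀ 𝒜 = Set.univ ∧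
      ∀ A ∈ 𝒜, ∃ g, ∀ f ∈ s, f ≠ g → ∀ᵐ a ∂μ, a ∈ A → f a = 0 := by
  have hsupp : ∀ f : Lp ℝ q μ, MeasurableSet (Function.support f) := fun f =>
    (Lp.stronglyMeasurable f).measurableSet_support
  refine ⟨insert (⋃ f ∈ s, Function.support f)ᶜ ((fun f : Lp ℝ q μ => Function.support f) '' s),
    (hs.image _).insert _, ?_, ?_, ?_⟩
  · rintro _ (rfl | ⟨f, -, rfl⟩)
    exacts [(MeasurableSet.biUnion hs.countable fun f _ => hsupp f).compl, hsupp f]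
  · refine Set.eq_univ_of_forall fun a => ?_
    by_cases ha : ∃ f ∈ s, f a ≠ 0
    · obtain ⟨f, hf, hfa⟩ := ha
      exact ⟨_, Set.mem_insert_of_mem _ ⟨f, hf, rfl⟩, hfa⟩
    · exact ⟨_, Set.mem_insert _ _, by simpa using ha⟩
  · rintro _ (rfl | ⟨g, hg, rfl⟩)
    · refine ⟨0, fun f hf _ => ae_of_all _ fun a ha => ?_⟩
      simp only [Set.mem_compl_iff, Set.mem_iUnion, Function.mem_support, not_exists,
        not_not] at ha
      exact ha f hf
    · exact ⟨g, fun f hf hfg => (hdisj hf hg hfg).mono fun a ha hga => ha.resolve_right hga⟩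

theorem span_image_indicatorₗ_le_span_singleton (hA : MeasurableSet A) {s : Set (Lp ℝ q μ)} {g : Lp ℝ q μ}
    (hg : ∀ f ∈ s, f ≠ g → ∀ᵐ a ∂μ, a ∈ A → f a = 0) :
    Submodule.span ℝ (Lp.indicatorₗ hA '' s) ≤ Submodule.span ℝ {Lp.indicatorₗ hA g} := by
  refine Submodule.span_le.mpr ?_
  rintro _ ⟨f, hf, rfl⟩
  by_cases hfg : f = g
  · exact hfg ▸ Submodule.mem_span_singleton_self _
  · rw [Lp.indicatorₗ_eq_zero hA (hg f hf hfg)]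
    exact Submodule.zero_mem _

def MeasureTheory.SimpleFunc.pi {ι β : Type*} [Finite ι] (f : ι → SimpleFunc α β) :
    SimpleFunc α (ι → β) where
  toFun a i := f i a
  measurableSet_fiber' y := by
    convert MeasurableSet.iInter fun i => (f i).measurableSet_fiber (y i)
    ext a
    simp [funext_iff]
  finite_range' := (Set.Finite.pi' fun i => (f i).finite_range).subset <| by
    rintro _ ⟨a, rfl⟩ i
    exact ⟨a, rfl⟩

theorem MeasureTheory.SimpleFunc.apply_eq_sum_fiber {ι : Type*} [Fintype ι]
    (S : SimpleFunc α (ι → ℝ)) (a : α) (i : ι) :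
    S a i = ∑ y ∈ S.range.filter (· ≠ 0), y i * (S ⁻¹' {y}).indicator 1 a := by
  simp only [Set.indicator, Set.mem_preimage, Set.mem_singleton_iff, Pi.one_apply,
    mul_ite, mul_one, mul_zero]
  rw [Finset.sum_ite_eq]
  split_ifs with h
  · rfl
  · have h0 : S a = 0 := by
      by_contra h'
      exact h (Finset.mem_filter.mpr ⟨S.mem_range_self a, h'⟩)
    rw [h0, Pi.zero_apply]

variable [Fact (1 ≤ q)]

theorem exists_disjointFamilyOn_span_mem (hq : q ≠ ∞) {ι : Type*} [Fintype ι]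
    (g : ι → Lp.simpleFunc ℝ q μ) :
    ∃ s : Set (Lp ℝ q μ), DisjointFamilyOn Set.univ s ∧
      ∀ i, (g i : Lp ℝ q μ) ∈ Submodule.span ℝ s := by
  have hq0 : q ≠ 0 := (zero_lt_one.trans_le (Fact.out : 1 ≤ q)).ne'
  let f i := Lp.simpleFunc.toSimpleFunc (g i)
  -- the level sets of `S` form the common refinement of the level sets of the `f i`
  let S := SimpleFunc.pi f
  let Z := S.range.filter (· ≠ 0)
  have hfin : ∀ y ∈ Z, μ (S ⁻¹' {y}) ≠ ∞ := by
    intro y hy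
    obtain ⟨i, hi⟩ := Function.ne_iff.mp (Finset.mem_filter.mp hy).2
    refine ne_top_of_le_ne_top ?_ (measure_mono fun a (ha : S a = y) => congrFun ha i)
    exact (SimpleFunc.measure_preimage_lt_top_of_memLp hq0 hq (f i) (Lp.simpleFunc.memLp (g i))
      (y i) hi).ne
  let w : Z → Lp ℝ q μ := fun y => indicatorConstLp q (S.measurableSet_fiber y) (hfin y y.2) 1
  have hgw : ∀ i, (g i : Lp ℝ q μ) = ∑ y, y.1 i • w y := by
    intro i
    refine Lp.ext ?_
    have hw : ∀ᵐ a ∂μ, ∀ y : Z, (y.1 i • w y) a = y.1 i * (S ⁻¹' {y.1}).indicator 1 a := by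
      refine ae_all_iff.mpr fun y => ?_
      filter_upwards [Lp.coeFn_smul (y.1 i) (w y),
        (indicatorConstLp_coeFn : ⇑(w y) =ᵐ[μ] _)] with a h₁ h₂
      rw [h₁, Pi.smul_apply, h₂, smul_eq_mul]
      rfl
    filter_upwards [(Lp.simpleFunc.toSimpleFunc_eq_toFun (g i)).symm,
      Lp.coeFn_finsetSum Finset.univ fun y => y.1 i • w y, hw] with a hga hsum hwa
    rw [hga, hsum, Finset.sum_apply, Finset.sum_congr rfl fun y _ => hwa y,
      Finset.sum_coe_sort Z fun y => y i * (S ⁻¹' {y}).indicator 1 a]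
    exact S.apply_eq_sum_fiber a i
  refine ⟨Set.range w, ⟨Set.finite_range w, ?_, fun _ _ => ae_of_all _ fun _ h => absurd trivial h⟩,
    fun i => hgw i ▸ Submodule.sum_mem _ fun y _ =>
      Submodule.smul_mem _ _ (Submodule.subset_span ⟨y, rfl⟩)⟩
  rintro _ ⟨y, rfl⟩ _ ⟨y', rfl⟩ hne
  refine disjSupp_of_disjoint indicatorConstLp_coeFn_notMem indicatorConstLp_coeFn_notMem ?_
  exact Disjoint.preimage _ (Set.disjoint_singleton.mpr fun h => hne (by rw [Subtype.ext h]))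

theorem Lp.norm_indicatorₗ_le_of_setLIntegral_le (hq : q ≠ ∞) (hA : MeasurableSet A)
    (f : Lp ℝ q μ) {δ : ℝ} (hδ : 0 ≤ δ)
    (h : ∫⁻ a in A, ‖f a‖ₑ ^ q.toReal ∂μ ≤ ENNReal.ofReal δ ^ q.toReal) :
    ‖Lp.indicatorₗ hA f‖ ≤ δ := by
  have hq0 : q ≠ 0 := (zero_lt_one.trans_le (Fact.out : 1 ≤ q)).ne'
  have hp : 0 < q.toReal := ENNReal.toReal_pos hq0 hq
  rw [Lp.norm_def, eLpNorm_congr_ae (Lp.indicatorₗ_coeFn hA f),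
    eLpNorm_indicator_eq_eLpNorm_restrict hA, eLpNorm_eq_lintegral_rpow_enorm_toReal hq0 hq]
  refine ENNReal.toReal_le_of_le_ofReal hδ ?_
  calc _ ≤ (ENNReal.ofReal δ ^ q.toReal) ^ (1 / q.toReal) :=
        ENNReal.rpow_le_rpow h (by positivity)
    _ = ENNReal.ofReal δ := by
        rw [← ENNReal.rpow_mul, mul_one_div_cancel hp.ne', ENNReal.rpow_one]

theorem exists_disjointFamilyOn_approx (hq : q ≠ ∞) (F : Submodule ℝ (Lp ℝ q μ))
    [FiniteDimensional ℝ F] {ε : ℝ} (hε : 0 < ε) :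
    ∃ s : Set (Lp ℝ q μ), DisjointFamilyOn Set.univ s ∧
      ∃ T : F →ₗ[ℝ] Submodule.span ℝ s, ∀ x, ‖(T x : Lp ℝ q μ) - x‖ ≤ ε * ‖x‖ := by
  let b := Module.finBasis ℝ F
  obtain ⟨δ, hδ, hsmall⟩ := b.exists_pos_forall_norm_le (F := Lp ℝ q μ) hε
  choose g hg using fun i => (Lp.simpleFunc.denseRange hq).exists_dist_lt (b i : Lp ℝ q μ) hδ
  obtain ⟨s, hs, hgs⟩ := exists_disjointFamilyOn_span_mem hq g
  let T : F →ₗ[ℝ] Submodule.span ℝ s := b.constr ℝ fun i => ⟨g i, hgs i⟩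
  refine ⟨s, hs, T, hsmall ((Submodule.span ℝ s).subtype ∘ₗ T - F.subtype) fun i => ?_⟩
  simpa [T, dist_eq_norm'] using (hg i).le

theorem exists_normalized_seq_of_disjointFamilyOn {D : ℕ → Set α} {s : ℕ → Set (Lp ℝ q μ)}
    (hD : Pairwise fun k l => Disjoint (D k) (D l)) (hs : ∀ k, DisjointFamilyOn (D k) (s k))
    (hne : ∀ k, ∃ f ∈ s k, f ≠ 0) :
    ∃ u : ℕ → Lp ℝ q μ, (∀ n, ‖u n‖ = 1) ∧ Pairwise (fun i j => DisjSupp (u i) (u j)) ∧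
      ∀ k, s k ⊆ Submodule.span ℝ (Set.range u) := by
  have hcross : ∀ {k l f g}, f ∈ s k → g ∈ s l → k ≠ l → DisjSupp f g := fun hf hg hkl =>
    disjSupp_of_disjoint ((hs _).2.2 _ hf) ((hs _).2.2 _ hg) (hD hkl)
  let S := (⋃ k, s k) \ {0}
  have hS : S.Pairwise DisjSupp := by
    rintro f ⟨hf, -⟩ g ⟨hg, -⟩ hfg
    obtain ⟨k, hf⟩ := Set.mem_iUnion.mp hf
    obtain ⟨l, hg⟩ := Set.mem_iUnion.mp hg
    by_cases hkl : k = l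
    · subst hkl
      exact (hs k).2.1 hf hg hfg
    · exact hcross hf hg hkl
  choose x hx hx0 using hne
  have hinf : S.Infinite := Set.infinite_of_injective_forall_mem (f := x)
    (fun k l hkl => by_contra fun h =>
      hx0 k (eq_zero_of_disjSupp_self (hcross (hx k) (hkl ▸ hx l) h)))
    fun k => ⟨Set.mem_iUnion.mpr ⟨k, hx k⟩, hx0 k⟩
  obtain ⟨_⟩ := Set.countable_infinite_iff_nonempty_denumerable.mp
    ⟨(Set.countable_iUnion fun k => (hs k).1.countable).mono Set.sdiff_subset, hinf⟩
  let e : ℕ ≃ S := (Denumerable.eqv S).symm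
  refine ⟨fun n => ‖(e n : Lp ℝ q μ)‖⁻¹ • (e n : Lp ℝ q μ),
    fun n => norm_smul_inv_norm (𝕜 := ℝ) (e n).2.2,
    fun i j hij => (hS (e i).2 (e j).2 fun h => hij (e.injective (Subtype.ext h))).smul _ _,
    fun k f hf => ?_⟩
  by_cases hf0 : f = 0
  · exact hf0 ▸ Submodule.zero_mem _
  obtain ⟨n, hn⟩ := e.surjective ⟨f, Set.mem_iUnion.mpr ⟨k, hf⟩, hf0⟩
  rw [← smul_inv_smul₀ (norm_ne_zero_iff.mpr hf0) f]
  exact Submodule.smul_mem _ _ (Submodule.subset_span ⟨n, by simp only [hn]⟩)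

end Lp

section Unbounded

variable {α : Type*} [MeasurableSpace α] {μ : Measure α} {q : ℝ≥0∞} [Fact (1 ≤ q)]
  {Y : Type*} [NormedAddCommGroup Y] [NormedSpace ℝ Y] {Ω : Lp ℝ q μ → Y} {A D T T' : Set α}

def BadOn (Ω : Lp ℝ q μ → Y) (T : Set α) (c : ℝ) : Prop :=
  ∃ s, DisjointFamilyOn T s ∧ ¬ TrivialOnWith Ω (Submodule.span ℝ s) c

def UnboundedOn (Ω : Lp ℝ q μ → Y) (T : Set α) : Prop :=
  ∀ c, BadOn Ω T c

theorem BadOn.mono {c c' : ℝ} (h : BadOn Ω T c) (hT : T ⊆ T') (hc : c' ≤ c) : BadOn Ω T' c' :=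
  let ⟨s, hs, hbad⟩ := h
  ⟨s, hs.mono hT, fun htriv => hbad (htriv.mono_const hc)⟩

theorem UnboundedOn.mono (h : UnboundedOn Ω T) (hT : T ⊆ T') : UnboundedOn Ω T' :=
  fun c => (h c).mono hT le_rfl

theorem not_unboundedOn_empty (hΩ : IsQuasiLinear Ω) : ¬ UnboundedOn Ω (∅ : Set α) := by
  intro h
  obtain ⟨s, hs, hbad⟩ := h 0
  obtain ⟨f, hf, hf0⟩ := exists_ne_zero_of_not_trivialOnWith_span hΩ.1 le_rfl hbad
  refine hf0 (Lp.ext ?_)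
  filter_upwards [hs.2.2 f hf, Lp.coeFn_zero ℝ q μ] with a ha h₀
  rw [h₀]
  exact ha (Set.notMem_empty a)

theorem UnboundedOn.inter_or_diff (hΩ : IsQuasiLinear Ω) (h : UnboundedOn Ω D)
    (hA : MeasurableSet A) : UnboundedOn Ω (D ∩ A) ∨ UnboundedOn Ω (D \ A) := by
  obtain ⟨-, Q, hQ0, hQ⟩ := hΩ
  refine or_iff_not_imp_left.mpr fun hDA c => ?_
  obtain ⟨c₀, hc₀⟩ := not_forall.mp hDA
  obtain ⟨s, hs, hbad⟩ := h (max c₀ 0 + max c 0 + 2 * Q)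
  refine ⟨Lp.indicatorₗ hA.compl '' s, hs.image_indicatorₗ hA.compl, fun htriv => hbad ?_⟩
  have h₁ : TrivialOnWith Ω (Submodule.span ℝ (Lp.indicatorₗ hA '' s)) (max c₀ 0) := by
    by_contra h₁
    exact hc₀ ⟨_, hs.image_indicatorₗ hA, fun ht => h₁ (ht.mono_const (le_max_left _ _))⟩
  exact trivialOnWith_of_decomposition hQ0 hQ (Lp.indicatorₗ_add_indicatorₗ_compl hA)
    (Lp.norm_indicatorₗ_le hA) (Lp.norm_indicatorₗ_le hA.compl) (Submodule.map_span _ s).le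
    (Submodule.map_span _ s).le (le_max_right _ _) (le_max_right _ _) h₁
    (htriv.mono_const (le_max_left _ _))

theorem UnboundedOn.exists_inter (hΩ : IsQuasiLinear Ω) (h : UnboundedOn Ω D)
    {𝒜 : Set (Set α)} (h𝒜 : 𝒜.Finite) (hmeas : ∀ A ∈ 𝒜, MeasurableSet A) (hD : D ⊆ ⋃₀ 𝒜) :
    ∃ A ∈ 𝒜, UnboundedOn Ω (D ∩ A) := by
  induction 𝒜, h𝒜 using Set.Finite.induction_on generalizing D with
  | empty => exact absurd (h.mono (by simpa using hD)) (not_unboundedOn_empty hΩ)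
  | @insert A 𝒜 _ _ ih =>
    rcases h.inter_or_diff hΩ (hmeas A (Set.mem_insert A 𝒜)) with hDA | hDA
    · exact ⟨A, Set.mem_insert A 𝒜, hDA⟩
    · obtain ⟨B, hB, hDB⟩ := ih hDA (fun B hB => hmeas B (Set.mem_insert_of_mem A hB))
        fun a ha => by simpa [ha.2] using hD ha.1
      exact ⟨B, Set.mem_insert_of_mem A hB,
        hDB.mono (Set.inter_subset_inter_left _ Set.sdiff_subset)⟩

theorem UnboundedOn.exists_split (hΩ : IsQuasiLinear Ω) (hD : MeasurableSet D)
    (h : UnboundedOn Ω D) (c : ℝ) :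
    ∃ P ⊆ D, MeasurableSet P ∧ UnboundedOn Ω P ∧ BadOn Ω (D \ P) c := by
  obtain ⟨hhom, Q, hQ0, hQ⟩ := id hΩ
  obtain ⟨s, hs, hbad⟩ := h (max c 0 + 2 * Q)
  obtain ⟨𝒜, h𝒜, hmeas, hcover, hone⟩ := exists_cover_of_pairwise_disjSupp hs.1 hs.2.1
  obtain ⟨A, hA𝒜, hDA⟩ := h.exists_inter hΩ h𝒜 hmeas (hcover ▸ Set.subset_univ D)
  have hP : MeasurableSet (D ∩ A) := hD.inter (hmeas A hA𝒜)
  obtain ⟨g, hg⟩ := hone A hA𝒜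
  refine ⟨D ∩ A, Set.inter_subset_left, hP, hDA, Lp.indicatorₗ hP.compl '' s,
    (hs.image_indicatorₗ hP.compl).mono fun a ha => ⟨ha.1, ha.2⟩, fun htriv => hbad ?_⟩
  -- the family restricted to `D ∩ A` spans at most a line, on which `Ω` is linear
  have h₁ := trivialOnWith_zero_of_le_span_singleton hhom <| span_image_indicatorₗ_le_span_singleton hP
    fun f hf hfg => (hg f hf hfg).mono fun a ha haP => ha haP.2
  simpa using trivialOnWith_of_decomposition hQ0 hQ (Lp.indicatorₗ_add_indicatorₗ_compl hP)
    (Lp.norm_indicatorₗ_le hP) (Lp.norm_indicatorₗ_le hP.compl) (Submodule.map_span _ s).le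
    (Submodule.map_span _ s).le le_rfl (le_max_right c 0) h₁ (htriv.mono_const (le_max_left c 0))

theorem UnboundedOn.exists_subset_measure_lt (hΩ : IsQuasiLinear Ω) (hT : MeasurableSet T)
    (h : UnboundedOn Ω T) (ν : Measure α) [IsFiniteMeasure ν] {η : ℝ≥0∞} (hη : 0 < η) :
    ∃ D ⊆ T, MeasurableSet D ∧ UnboundedOn Ω D ∧ ν D < η := by
  let 𝒟 := {D | D ⊆ T ∧ MeasurableSet D ∧ UnboundedOn Ω D}
  set m := ⨅ D : 𝒟, ν D
  have hm : m < ∞ := (iInf_le (fun D : 𝒟 => ν D) ⟨T, subset_rfl, hT, h⟩).trans_lt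
    (measure_lt_top ν T)
  -- splitting a nearly `ν`-minimal unbounded set leaves a bad set of small measure
  have hsmall : ∀ (c : ℝ) {ξ : ℝ≥0∞}, ξ ≠ 0 →
      ∃ W ⊆ T, MeasurableSet W ∧ BadOn Ω W c ∧ ν W < ξ := by
    intro c ξ hξ
    obtain ⟨⟨D, hDT, hD, hDu⟩, hDν⟩ := iInf_lt_iff.mp (ENNReal.lt_add_right hm.ne hξ)
    obtain ⟨P, hPD, hP, hPu, hW⟩ := hDu.exists_split hΩ hD c
    refine ⟨D \ P, Set.sdiff_subset.trans hDT, hD.diff hP, hW, ?_⟩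
    have hmP : m ≤ ν P := iInf_le (fun D : 𝒟 => ν D) ⟨P, hPD.trans hDT, hP, hPu⟩
    rw [measure_sdiff hPD hP.nullMeasurableSet (measure_ne_top ν P)]
    exact ENNReal.sub_lt_of_lt_add (measure_mono hPD)
      (hDν.trans_le (by rw [add_comm]; gcongr))
  have hm0 : m = 0 := by
    by_contra hm0
    obtain ⟨ε, hε, hεm⟩ := ENNReal.exists_pos_sum_of_countable hm0 ℕ
    choose W hWT hW hWbad hWν using fun k : ℕ => hsmall k (ENNReal.coe_ne_zero.mpr (hε k).ne')
    have hU : (⋃ k, W k) ∈ 𝒟 := ⟨Set.iUnion_subset hWT, .iUnion hW,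
      fun c => (hWbad ⌈c⌉₊).mono (Set.subset_iUnion W _) (Nat.le_ceil c)⟩
    have := calc m ≤ ν (⋃ k, W k) := iInf_le (fun D : 𝒟 => ν D) ⟨_, hU⟩
      _ ≤ ∑' k, ν (W k) := measure_iUnion_le W
      _ ≤ ∑' k, (ε k : ℝ≥0∞) := ENNReal.tsum_le_tsum fun k => (hWν k).le
      _ < m := hεm
    exact lt_irrefl m this
  obtain ⟨⟨D, hDT, hD, hDu⟩, hDν⟩ := iInf_lt_iff.mp (hm0 ▸ hη : m < η)
  exact ⟨D, hDT, hD, hDu, hDν⟩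

theorem UnboundedOn.exists_subset_norm_indicatorₗ_le (hΩ : IsQuasiLinear Ω) (hq : q ≠ ∞)
    (hT : MeasurableSet T) (h : UnboundedOn Ω T) {ι : Type*} [Fintype ι] (f : ι → Lp ℝ q μ)
    {δ : ℝ} (hδ : 0 < δ) :
    ∃ (D : Set α) (hD : MeasurableSet D), D ⊆ T ∧ UnboundedOn Ω D ∧
      ∀ i, ‖Lp.indicatorₗ hD (f i)‖ ≤ δ := by
  have hq0 : q ≠ 0 := (zero_lt_one.trans_le (Fact.out : 1 ≤ q)).ne'
  let ν := μ.withDensity fun a => ∑ i, ‖f i a‖ₑ ^ q.toReal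
  have : IsFiniteMeasure ν := isFiniteMeasure_withDensity <| by
    rw [lintegral_finsetSum' _ fun i _ => (Lp.aestronglyMeasurable (f i)).enorm.pow_const _]
    exact (ENNReal.sum_lt_top.mpr fun i _ =>
      lintegral_rpow_enorm_lt_top_of_eLpNorm_lt_top hq0 hq (Lp.eLpNorm_lt_top (f i))).ne
  obtain ⟨D, hDT, hD, hDu, hDν⟩ := h.exists_subset_measure_lt hΩ hT ν
    (ENNReal.rpow_pos (ENNReal.ofReal_pos.mpr hδ) ENNReal.ofReal_ne_top)
  refine ⟨D, hD, hDT, hDu, fun i => Lp.norm_indicatorₗ_le_of_setLIntegral_le hq hD (f i) hδ.le ?_⟩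
  calc ∫⁻ a in D, ‖f i a‖ₑ ^ q.toReal ∂μ ≤ ∫⁻ a in D, ∑ j, ‖f j a‖ₑ ^ q.toReal ∂μ :=
        lintegral_mono fun a => Finset.single_le_sum (f := fun j => ‖f j a‖ₑ ^ q.toReal)
          (fun j _ => zero_le) (Finset.mem_univ i)
    _ = ν D := (withDensity_apply _ hD).symm
    _ ≤ _ := hDν.le

theorem unboundedOn_univ (hΩ : IsQuasiLinear Ω) (hq : q ≠ ∞) (hnt : ¬ LocallyTrivial Ω) :
    UnboundedOn Ω (Set.univ : Set α) := by
  obtain ⟨hhom, Q, hQ0, hQ⟩ := hΩ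
  intro c
  obtain ⟨F, _, hF⟩ : ∃ F : Submodule ℝ (Lp ℝ q μ), FiniteDimensional ℝ F ∧
      ¬ TrivialOnWith Ω F (max c 0 + 3 * Q + 2) := by
    by_contra! h
    exact hnt ⟨_, by linarith [le_max_right c 0], h⟩
  obtain ⟨ε, hε, hpert⟩ := exists_pos_trivialOnWith_of_approx hhom hQ0 hQ F (le_max_right c 0)
  obtain ⟨s, hs, T, hT⟩ := exists_disjointFamilyOn_approx hq F hε
  exact ⟨s, hs, fun htriv => hF (hpert _ T hT (htriv.mono_const (le_max_left c 0)))⟩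

theorem UnboundedOn.exists_step (hΩ : IsQuasiLinear Ω) (hq : q ≠ ∞) (hR : MeasurableSet T)
    (h : UnboundedOn Ω T) {c : ℝ} (hc : 0 ≤ c) :
    ∃ T' ⊆ T, MeasurableSet T' ∧ UnboundedOn Ω T' ∧ BadOn Ω (T \ T') c := by
  obtain ⟨hhom, Q, hQ0, hQ⟩ := id hΩ
  obtain ⟨s, hs, hbad⟩ := h (c + 3 * Q + 2)
  have : FiniteDimensional ℝ (Submodule.span ℝ s) := FiniteDimensional.span_of_finite ℝ hs.1
  obtain ⟨ε, hε, hpert⟩ := exists_pos_trivialOnWith_of_approx hhom hQ0 hQ (Submodule.span ℝ s) hc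
  let b := Module.finBasis ℝ (Submodule.span ℝ s)
  obtain ⟨δ, hδ, hsmall⟩ := b.exists_pos_forall_norm_le (F := Lp ℝ q μ) hε
  obtain ⟨T', hT', hT'T, hT'u, hT'δ⟩ :=
    h.exists_subset_norm_indicatorₗ_le hΩ hq hR (fun i => (b i : Lp ℝ q μ)) hδ
  -- cutting `T'` off moves the span of the family only a little
  let P := Lp.indicatorₗ (q := q) (μ := μ) hT'.compl
  let S : Submodule.span ℝ s →ₗ[ℝ] Submodule.span ℝ (P '' s) :=
    P.restrict fun x hx => Submodule.apply_mem_span_image_of_mem_span P hx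
  refine ⟨T', hT'T, hT', hT'u, P '' s, hs.image_indicatorₗ hT'.compl,
    fun htriv => hbad (hpert _ S (fun x => ?_) htriv)⟩
  have hx : ‖Lp.indicatorₗ hT' (x : Lp ℝ q μ)‖ ≤ ε * ‖x‖ :=
    hsmall ((Lp.indicatorₗ hT').comp (Submodule.span ℝ s).subtype) hT'δ x
  have hSx : (S x : Lp ℝ q μ) - x = -Lp.indicatorₗ hT' (x : Lp ℝ q μ) := by
    calc P x - x = P x - (Lp.indicatorₗ hT' (x : Lp ℝ q μ) + P x) := by
          rw [Lp.indicatorₗ_add_indicatorₗ_compl hT' (x : Lp ℝ q μ)]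
      _ = -Lp.indicatorₗ hT' (x : Lp ℝ q μ) := by abel
  rwa [hSx, norm_neg]

theorem exists_seq_disjointFamilyOn_not_trivialOnWith (hΩ : IsQuasiLinear Ω) (hq : q ≠ ∞)
    (huniv : UnboundedOn Ω (Set.univ : Set α)) :
    ∃ (D : ℕ → Set α) (s : ℕ → Set (Lp ℝ q μ)), Pairwise (fun k l => Disjoint (D k) (D l)) ∧
      ∀ k, DisjointFamilyOn (D k) (s k) ∧ ¬ TrivialOnWith Ω (Submodule.span ℝ (s k)) k := by
  have hstep : ∀ R, MeasurableSet R → UnboundedOn Ω R → ∀ k : ℕ, ∃ R' ⊆ R, MeasurableSet R' ∧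
      UnboundedOn Ω R' ∧ ∃ s, DisjointFamilyOn (R \ R') s ∧
        ¬ TrivialOnWith Ω (Submodule.span ℝ s) k :=
    fun R hR hRu k => hRu.exists_step hΩ hq hR k.cast_nonneg
  choose! next hnext hnext_meas hnext_unb blk hblk using hstep
  let R : ℕ → Set α := fun k => Nat.rec Set.univ (fun k R => next R k) k
  have hR : ∀ k, MeasurableSet (R k) ∧ UnboundedOn Ω (R k) := by
    intro k
    induction k with
    | zero => exact ⟨MeasurableSet.univ, huniv⟩
    | succ k ih => exact ⟨hnext_meas _ ih.1 ih.2 k, hnext_unb _ ih.1 ih.2 k⟩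
  have hanti : Antitone R := antitone_nat_of_succ_le fun k => hnext _ (hR k).1 (hR k).2 k
  refine ⟨fun k => R k \ R (k + 1), fun k => blk (R k) k, fun k l hkl => ?_,
    fun k => hblk _ (hR k).1 (hR k).2 k⟩
  wlog h : k < l generalizing k l
  · exact (this l k hkl.symm (hkl.lt_or_gt.resolve_left h)).symm
  exact Set.disjoint_left.mpr fun a ha ha' => ha.2 (hanti (Nat.succ_le_of_lt h) ha'.1)

end Unbounded

theorem exists_disjoint_sequence_not_locallyTrivial_general
    {α : Type*} [MeasurableSpace α] {μ : Measure α}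
    {q : ℝ≥0∞} [Fact (1 ≤ q)] (hq : q ≠ ∞)
    {Y : Type*} [NormedAddCommGroup Y] [NormedSpace ℝ Y]
    (Ω : Lp ℝ q μ → Y) (hΩ : IsQuasiLinear Ω)
    (hnt : ¬ LocallyTrivial Ω) :
    ∃ u : ℕ → Lp ℝ q μ, (∀ n, ‖u n‖ = 1) ∧
      Pairwise (fun i j => DisjSupp (u i) (u j)) ∧
      ¬ LocallyTrivialOn Ω (Submodule.span ℝ (Set.range u)).topologicalClosure := by
  obtain ⟨D, s, hD, hs⟩ :=
    exists_seq_disjointFamilyOn_not_trivialOnWith hΩ hq (unboundedOn_univ hΩ hq hnt)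
  obtain ⟨u, hu, hdisj, hspan⟩ := exists_normalized_seq_of_disjointFamilyOn hD (fun k => (hs k).1)
    fun k => exists_ne_zero_of_not_trivialOnWith_span hΩ.1 k.cast_nonneg (hs k).2
  refine ⟨u, hu, hdisj, fun ⟨C, _, hC⟩ => ?_⟩
  have hk := hC _ ((Submodule.span_le.mpr (hspan ⌈C⌉₊)).trans (Submodule.le_topologicalClosure _))
    (FiniteDimensional.span_of_finite ℝ (hs ⌈C⌉₊).1.1)
  exact (hs ⌈C⌉₊).2 (hk.mono_const (Nat.le_ceil C))

/-- If a quasi-linear map `Ω` on `L_p(μ)` (`σ`-finite, `1 ≤ p < ∞`) with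
values in a Banach space is not locally trivial, then there is a normalized sequence of
pairwise disjointly supported functions such that the restriction of `Ω` to their closed
linear span (a copy of `ℓ_p`) is not locally trivial. -/
theorem exists_disjoint_sequence_not_locallyTrivial
    {α : Type*} [MeasurableSpace α] {μ : Measure α} [SigmaFinite μ]
    {q : ℝ≥0∞} [Fact (1 ≤ q)] (hq : q ≠ ∞)
    {Y : Type*} [NormedAddCommGroup Y] [NormedSpace ℝ Y] [CompleteSpace Y]
    (Ω : Lp ℝ q μ → Y) (hΩ : IsQuasiLinear Ω)
    (hnt : ¬ LocallyTrivial Ω) :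
    ∃ u : ℕ → Lp ℝ q μ, (∀ n, ‖u n‖ = 1) ∧
      Pairwise (fun i j => DisjSupp (u i) (u j)) ∧
      ¬ LocallyTrivialOn Ω (Submodule.span ℝ (Set.range u)).topologicalClosure :=
  exists_disjoint_sequence_not_locallyTrivial_general hq Ω hΩ hnt
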